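/- arXiv:1411.5007 — 5 statements merged into one kernel-verified Lean document; each statement's English description precedes it below -/
import Mathlib

section
/- If two players repeatedly play a zero-sum matrix game with payoff matrix A for T rounds, with the row player choosing x^t and column player y^t, and each player's external regret (relative to the best fixed strategy in hindsight, with row player receiving utility vectors A y^t and column player receiving -A^T x^t) is at most ε·T, then the pair of average strategies (x̄, ȳ) = ((1/T)∑ x^t, (1/T)∑ y^t) is a 2ε-Nash equilibrium: for all x' in the row player's strategy simplex, x'·A ȳ ≤ x̄·A ȳ + 2ε, and for all y' in the column player's simplex, x̄·A ȳ ≤ x̄·A y' + 2ε. -/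
/-!
Averaging the row player's regret bound over the rounds gives `x' ⬝ A ȳ ≤ v + ε` for every
mixed strategy `x'`, where `v = (1/T) ∑ₜ xᵗ ⬝ A yᵗ` is the average realised payoff; averaging
the column player's bound gives `v ≤ x̄ ⬝ A y' + ε` for every `y'`. Since `x̄` and `ȳ` are
themselves mixed strategies, the choices `y' = ȳ` and `x' = x̄` pin `x̄ ⬝ A ȳ` within `ε` of `v`,
so a unilateral deviation gains at most `2ε`.
-/

open Matrix Finset

theorem smul_sum_mem_stdSimplex {α : Type*} [Fintype α] {T : ℕ} (hT : 0 < T)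
    {x : Fin T → α → ℝ} (hx : ∀ t, x t ∈ stdSimplex ℝ α) :
    (1 / (T : ℝ)) • ∑ t, x t ∈ stdSimplex ℝ α := by
  rw [smul_sum]
  refine (convex_stdSimplex ℝ α).sum_mem (fun _ _ => by positivity) ?_ fun t _ => hx t
  simp [hT.ne']

theorem avg_le_avg_add_of_sum_sub_le {T : ℕ} (hT : 0 < T) {f g : Fin T → ℝ} {ε : ℝ}
    (h : ∑ t, (f t - g t) ≤ ε * T) :
    1 / (T : ℝ) * ∑ t, f t ≤ 1 / (T : ℝ) * ∑ t, g t + ε := by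
  have hT' : (0 : ℝ) < T := by exact_mod_cast hT
  rw [sum_sub_distrib] at h
  rw [← sub_le_iff_le_add', ← mul_sub, one_div_mul_eq_div, div_le_iff₀ hT']
  linarith

section Bilinear

variable {R ι m n : Type*} [CommSemiring R] [Fintype ι] [Fintype m] [Fintype n]

theorem dotProduct_mulVec_smul_sum (A : Matrix m n R) (v : m → R) (c : R) (y : ι → n → R) :
    v ⬝ᵥ A *ᵥ (c • ∑ t, y t) = c * ∑ t, v ⬝ᵥ A *ᵥ y t := by
  rw [mulVec_smul, dotProduct_smul, mulVec_sum, dotProduct_sum, smul_eq_mul]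

theorem smul_sum_dotProduct (c : R) (x : ι → m → R) (w : m → R) :
    (c • ∑ t, x t) ⬝ᵥ w = c * ∑ t, x t ⬝ᵥ w := by
  rw [smul_dotProduct, sum_dotProduct, smul_eq_mul]

end Bilinear

theorem approx_saddle_of_le_value_add {α β : Type*} {S : Set α} {S' : Set β} {f : α → β → ℝ}
    {a : α} {b : β} {v ε : ℝ} (ha : a ∈ S) (hb : b ∈ S')
    (hrow : ∀ a' ∈ S, f a' b ≤ v + ε) (hcol : ∀ b' ∈ S', v ≤ f a b' + ε) :
    (∀ a' ∈ S, f a' b ≤ f a b + 2 * ε) ∧ (∀ b' ∈ S', f a b ≤ f a b' + 2 * ε) := by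
  have hlow := hcol b hb
  have hup := hrow a ha
  exact ⟨fun a' ha' => by linarith [hrow a' ha'], fun b' hb' => by linarith [hcol b' hb']⟩

/-- Two no-regret learners in self-play: if each player's external regret is at
most `ε·T`, the average strategies form a `2ε`-Nash equilibrium. -/
theorem stmt_0 {m n T : ℕ} (hT : 0 < T) (A : Matrix (Fin m) (Fin n) ℝ)
    (x : Fin T → Fin m → ℝ) (y : Fin T → Fin n → ℝ) (ε : ℝ)
    (hx : ∀ t, x t ∈ stdSimplex ℝ (Fin m))
    (hy : ∀ t, y t ∈ stdSimplex ℝ (Fin n))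
    (hRegRow : ∀ x' ∈ stdSimplex ℝ (Fin m),
      ∑ t, (x' ⬝ᵥ A.mulVec (y t) - x t ⬝ᵥ A.mulVec (y t)) ≤ ε * T)
    (hRegCol : ∀ y' ∈ stdSimplex ℝ (Fin n),
      ∑ t, (x t ⬝ᵥ A.mulVec (y t) - x t ⬝ᵥ A.mulVec y') ≤ ε * T)
    (xbar : Fin m → ℝ) (ybar : Fin n → ℝ)
    (hxbar : xbar = (1 / (T : ℝ)) • ∑ t, x t)
    (hybar : ybar = (1 / (T : ℝ)) • ∑ t, y t) :
    (∀ x' ∈ stdSimplex ℝ (Fin m),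
      x' ⬝ᵥ A.mulVec ybar ≤ xbar ⬝ᵥ A.mulVec ybar + 2 * ε) ∧
    (∀ y' ∈ stdSimplex ℝ (Fin n),
      xbar ⬝ᵥ A.mulVec ybar ≤ xbar ⬝ᵥ A.mulVec y' + 2 * ε) := by
  subst hxbar hybar
  apply approx_saddle_of_le_value_add (f := fun x' y' => x' ⬝ᵥ A *ᵥ y')
    (v := 1 / (T : ℝ) * ∑ t, x t ⬝ᵥ A *ᵥ y t)
    (smul_sum_mem_stdSimplex hT hx) (smul_sum_mem_stdSimplex hT hy)
  · intro x' hx'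
    rw [dotProduct_mulVec_smul_sum]
    exact avg_le_avg_add_of_sum_sub_le hT (hRegRow x' hx')
  · intro y' hy'
    rw [smul_sum_dotProduct]
    exact avg_le_avg_add_of_sum_sub_le hT (hRegCol y' hy')
end

section
/- Regret-matching is equivalent to dual averaging over the simplex with regularizer h(x) = ‖x₊‖²/2: suppose the cumulative regret vector R^t = ∑_{i=1}^t (u^i − (u^i·x^i)𝟙) has some positive coordinate, and let β^t = (𝟙·R^t₊)/t and ḡ^t = −R^t/t. Then the unique minimizer of ḡ^t·x + β^t ‖x₊‖²/2 over {x : x ≥ 0} is x^{t+1} = R^t₊ / (𝟙·R^t₊), which lies in the simplex Δ_n. -/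
open Matrix Finset

/-!
Substituting `ḡᵗ = -βᵗ a` with `a = Rᵗ/(𝟙·Rᵗ₊)`, the objective `F` on the orthant is
`βᵗ/2 · ‖z - a‖²` up to a constant, so its minimizer there is the Euclidean projection `a₊` of
`a` onto the orthant. Quantitatively, the projection inequality `(z - a₊)·(a₊ - a) ≥ 0` for
`z ≥ 0` gives quadratic growth `F(z) ≥ F(a₊) + βᵗ/2 · ‖z - a₊‖²`, which yields both minimality
and uniqueness since `βᵗ > 0`. Finally `a₊ = Rᵗ₊/(𝟙·Rᵗ₊)`, a point of the simplex.
-/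

section DualAveraging

variable {ι : Type*} [Fintype ι]

noncomputable def dualAvgObjective (g : ι → ℝ) (β : ℝ) (z : ι → ℝ) : ℝ :=
  g ⬝ᵥ z + β * (∑ j, (max (z j) 0) ^ 2) / 2

theorem sum_max_zero_pos {r : ι → ℝ} (hr : ∃ j, 0 < r j) : 0 < ∑ k, max (r k) 0 := by
  obtain ⟨j₀, hj₀⟩ := hr
  exact sum_pos' (fun k _ => le_max_right _ _) ⟨j₀, mem_univ _, lt_max_of_lt_left hj₀⟩

theorem posPart_div_sum_mem_stdSimplex {r : ι → ℝ} (hr : ∃ j, 0 < r j) :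
    (fun j => max (r j) 0 / ∑ k, max (r k) 0) ∈ stdSimplex ℝ ι := by
  have hS := sum_max_zero_pos hr
  refine ⟨fun j => div_nonneg (le_max_right _ _) hS.le, ?_⟩
  rw [← sum_div, div_self hS.ne']

theorem sub_max_mul_max_sub_nonneg {a z : ℝ} (hz : 0 ≤ z) :
    0 ≤ (z - max a 0) * (max a 0 - a) := by
  rcases le_total a 0 with ha | ha
  · rw [max_eq_right ha]
    nlinarith
  · simp [max_eq_left ha]

theorem dualAvgObjective_neg_smul_eq (β : ℝ) (a : ι → ℝ) {z p : ι → ℝ}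
    (hz : ∀ j, 0 ≤ z j) (hp : ∀ j, 0 ≤ p j) :
    dualAvgObjective (-(β • a)) β z = dualAvgObjective (-(β • a)) β p
      + β / 2 * ∑ j, (z j - p j) ^ 2 + β * ∑ j, (z j - p j) * (p j - a j) := by
  simp only [dualAvgObjective, dotProduct, max_eq_left (hz _), max_eq_left (hp _), mul_sum,
    sum_div, ← sum_add_distrib, Pi.neg_apply, Pi.smul_apply, smul_eq_mul]
  exact sum_congr rfl fun j _ => by ring

theorem dualAvgObjective_posPart_add_le {β : ℝ} (hβ : 0 ≤ β) (a : ι → ℝ) {z : ι → ℝ}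
    (hz : ∀ j, 0 ≤ z j) :
    dualAvgObjective (-(β • a)) β (fun j => max (a j) 0)
        + β / 2 * ∑ j, (z j - max (a j) 0) ^ 2
      ≤ dualAvgObjective (-(β • a)) β z := by
  rw [dualAvgObjective_neg_smul_eq β a hz fun j => le_max_right _ _]
  exact le_add_of_nonneg_right <|
    mul_nonneg hβ (sum_nonneg fun j _ => sub_max_mul_max_sub_nonneg (hz j))

theorem eq_posPart_of_dualAvgObjective_le {β : ℝ} (hβ : 0 < β) (a : ι → ℝ) {z : ι → ℝ}
    (hz : ∀ j, 0 ≤ z j)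
    (hle : dualAvgObjective (-(β • a)) β z
      ≤ dualAvgObjective (-(β • a)) β (fun j => max (a j) 0)) :
    z = fun j => max (a j) 0 := by
  have hgrowth := dualAvgObjective_posPart_add_le hβ.le a hz
  have hsq : ∑ j, (z j - max (a j) 0) ^ 2 = 0 := by
    refine le_antisymm (nonpos_of_mul_nonpos_right ?_ (half_pos hβ))
      (sum_nonneg fun j _ => sq_nonneg _)
    linarith
  funext j
  have := (sum_eq_zero_iff_of_nonneg fun j _ => sq_nonneg _).mp hsq j (mem_univ j)
  exact sub_eq_zero.mp (pow_eq_zero_iff two_ne_zero |>.mp this)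

end DualAveraging

theorem stmt_6_general {n t : ℕ} (ht : 0 < t)
    (R : Fin n → ℝ)
    (hpos : ∃ j, 0 < R j)
    (β : ℝ) (hβ : β = (∑ j, max (R j) 0) / t)
    (g : Fin n → ℝ) (hg : ∀ j, g j = -R j / t)
    (xnext : Fin n → ℝ)
    (hxnext : ∀ j, xnext j = max (R j) 0 / ∑ k, max (R k) 0) :
    xnext ∈ stdSimplex ℝ (Fin n) ∧
    (∀ z : Fin n → ℝ, (∀ j, 0 ≤ z j) →
      g ⬝ᵥ xnext + β * (∑ j, (max (xnext j) 0) ^ 2) / 2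
        ≤ g ⬝ᵥ z + β * (∑ j, (max (z j) 0) ^ 2) / 2) ∧
    (∀ z : Fin n → ℝ, (∀ j, 0 ≤ z j) →
      g ⬝ᵥ z + β * (∑ j, (max (z j) 0) ^ 2) / 2
        = g ⬝ᵥ xnext + β * (∑ j, (max (xnext j) 0) ^ 2) / 2 → z = xnext) := by
  have hxnext_mem : xnext ∈ stdSimplex ℝ (Fin n) := by
    rw [funext hxnext]
    exact posPart_div_sum_mem_stdSimplex hpos
  set S := ∑ k, max (R k) 0
  have hS : 0 < S := sum_max_zero_pos hpos
  have hβpos : 0 < β := hβ ▸ div_pos hS (Nat.cast_pos.mpr ht)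
  have hxnext_eq : xnext = fun j => max (R j / S) 0 := funext fun j => by
    rw [hxnext, ← max_div_div_right hS.le, zero_div]
  have hg_eq : g = -(β • fun j => R j / S) := funext fun j => by
    simp only [hg, hβ, Pi.neg_apply, Pi.smul_apply, smul_eq_mul]
    field_simp
  subst hg_eq hxnext_eq
  refine ⟨hxnext_mem, fun z hz => ?_, fun z hz heq => ?_⟩
  · refine le_trans (le_add_of_nonneg_right ?_) (dualAvgObjective_posPart_add_le hβpos.le _ hz)
    exact mul_nonneg (half_pos hβpos).le (sum_nonneg fun j _ => sq_nonneg _)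
  · exact eq_posPart_of_dualAvgObjective_le hβpos _ hz heq.le

/-- Regret-matching is dual averaging over the simplex with regularizer
`‖x₊‖²/2`, step size `βᵗ = 𝟙·Rᵗ₊/t` and average gradient `ḡᵗ = −Rᵗ/t`: the
unique minimizer of `ḡᵗ·x + βᵗ‖x₊‖²/2` over the nonnegative orthant is
`Rᵗ₊/(𝟙·Rᵗ₊)`, which lies in the simplex. -/
theorem stmt_6 {n t : ℕ} (ht : 0 < t)
    (u : Fin t → Fin n → ℝ) (x : Fin t → Fin n → ℝ)
    (hx : ∀ i, x i ∈ stdSimplex ℝ (Fin n))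
    (R : Fin n → ℝ) (hR : ∀ j, R j = ∑ i, (u i j - u i ⬝ᵥ x i))
    (hpos : ∃ j, 0 < R j)
    (β : ℝ) (hβ : β = (∑ j, max (R j) 0) / t)
    (g : Fin n → ℝ) (hg : ∀ j, g j = -R j / t)
    (xnext : Fin n → ℝ)
    (hxnext : ∀ j, xnext j = max (R j) 0 / ∑ k, max (R k) 0) :
    xnext ∈ stdSimplex ℝ (Fin n) ∧
    (∀ z : Fin n → ℝ, (∀ j, 0 ≤ z j) →
      g ⬝ᵥ xnext + β * (∑ j, (max (xnext j) 0) ^ 2) / 2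
        ≤ g ⬝ᵥ z + β * (∑ j, (max (z j) 0) ^ 2) / 2) ∧
    (∀ z : Fin n → ℝ, (∀ j, 0 ≤ z j) →
      g ⬝ᵥ z + β * (∑ j, (max (z j) 0) ^ 2) / 2
        = g ⬝ᵥ xnext + β * (∑ j, (max (xnext j) 0) ^ 2) / 2 → z = xnext) :=
  stmt_6_general ht R hpos β hβ g hg xnext hxnext
end

section
/- (Minimax via no-regret) For any matrix A ∈ ℝ^{m×n}, max_{y∈Δ_n} min_{x∈Δ_m} x^T A y = min_{x∈Δ_m} max_{y∈Δ_n} x^T A y; moreover this common value can be approximated to within 2ε by the average iterates of any pair of algorithms each with time-averaged regret at most ε in self-play. -/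
open Matrix

/-!
The inequality `max_y min_x ≤ min_x max_y` holds for every bounded payoff. For the converse,
let `v = max_y min_x xᵀAy`. Every point `Ay` of the convex set `A Δₙ` has a coordinate `≤ v`
(its smallest coordinate is `min_x xᵀAy`), so `A Δₙ` misses the open orthant `{z | v < zᵢ ∀ i}`.
A hyperplane separating the two has a normal `w ≤ 0`, because the orthant is unbounded in every
positive direction, and `-w` normalised is a strategy `x` with `xᵀAy ≤ v` for all `y`.
Given the minimax equality, a `2ε`-equilibrium sandwiches its payoff between
`min_x xᵀAȳ ≥ x̄ᵀAȳ - 2ε` and `max_y x̄ᵀAy ≤ x̄ᵀAȳ + 2ε`.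
-/

open Set Function Bornology

section BoundedPayoff

variable {X Y : Type*} {f : X → Y → ℝ}

lemma bddAbove_range_of_isBounded_range_uncurry (hf : IsBounded (range (uncurry f))) (x : X) :
    BddAbove (range (f x)) :=
  hf.bddAbove.mono (range_subset_iff.2 fun y => mem_range_self (f := uncurry f) (x, y))

lemma bddBelow_range_swap_of_isBounded_range_uncurry (hf : IsBounded (range (uncurry f)))
    (y : Y) : BddBelow (range fun x => f x y) :=
  hf.bddBelow.mono (range_subset_iff.2 fun x => mem_range_self (f := uncurry f) (x, y))

lemma bddBelow_range_ciSup_of_isBounded_range_uncurry [Nonempty Y]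
    (hf : IsBounded (range (uncurry f))) : BddBelow (range fun x => ⨆ y, f x y) := by
  obtain ⟨b, hb⟩ := hf.bddBelow
  obtain ⟨y⟩ := ‹Nonempty Y›
  exact ⟨b, forall_mem_range.2 fun x =>
    (hb ⟨(x, y), rfl⟩).trans (le_ciSup (bddAbove_range_of_isBounded_range_uncurry hf x) y)⟩

lemma bddAbove_range_ciInf_of_isBounded_range_uncurry [Nonempty X]
    (hf : IsBounded (range (uncurry f))) : BddAbove (range fun y => ⨅ x, f x y) := by
  obtain ⟨b, hb⟩ := hf.bddAbove
  obtain ⟨x⟩ := ‹Nonempty X›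
  exact ⟨b, forall_mem_range.2 fun y =>
    (ciInf_le (bddBelow_range_swap_of_isBounded_range_uncurry hf y) x).trans (hb ⟨(x, y), rfl⟩)⟩

theorem ciSup_ciInf_le_ciInf_ciSup_of_isBounded [Nonempty X] [Nonempty Y]
    (hf : IsBounded (range (uncurry f))) : ⨆ y, ⨅ x, f x y ≤ ⨅ x, ⨆ y, f x y :=
  ciSup_le fun y => le_ciInf fun x =>
    (ciInf_le (bddBelow_range_swap_of_isBounded_range_uncurry hf y) x).trans
      (le_ciSup (bddAbove_range_of_isBounded_range_uncurry hf x) y)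

theorem abs_sub_ciInf_ciSup_le_of_forall_le_add (hf : IsBounded (range (uncurry f)))
    (hminimax : ⨆ y, ⨅ x, f x y = ⨅ x, ⨆ y, f x y) {δ : ℝ} {x₀ : X} {y₀ : Y}
    (hx₀ : ∀ x, f x₀ y₀ ≤ f x y₀ + δ) (hy₀ : ∀ y, f x₀ y ≤ f x₀ y₀ + δ) :
    |f x₀ y₀ - ⨅ x, ⨆ y, f x y| ≤ δ := by
  have : Nonempty X := ⟨x₀⟩
  have : Nonempty Y := ⟨y₀⟩
  rw [abs_sub_le_iff]
  constructor
  · have hlow : f x₀ y₀ - δ ≤ ⨅ x, f x y₀ := le_ciInf fun x => by linarith [hx₀ x]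
    have := le_ciSup (bddAbove_range_ciInf_of_isBounded_range_uncurry hf) y₀
    linarith
  · have hupp : ⨅ x, ⨆ y, f x y ≤ ⨆ y, f x₀ y :=
      ciInf_le (bddBelow_range_ciSup_of_isBounded_range_uncurry hf) x₀
    have := ciSup_le hy₀
    linarith

end BoundedPayoff

section Simplex

variable {ι : Type*} [Fintype ι]

lemma exists_forall_le_dotProduct [Nonempty ι] (z : ι → ℝ) :
    ∃ i, ∀ x ∈ stdSimplex ℝ ι, z i ≤ x ⬝ᵥ z := by
  obtain ⟨i, hi⟩ := Finite.exists_min z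
  refine ⟨i, fun x hx => ?_⟩
  calc z i = ∑ j, x j * z i := by rw [← Finset.sum_mul, hx.2, one_mul]
    _ ≤ x ⬝ᵥ z := Finset.sum_le_sum fun j _ => mul_le_mul_of_nonneg_left (hi j) (hx.1 j)

lemma geometric_hahn_banach_open_dotProduct {s t : Set (ι → ℝ)} (hs : Convex ℝ s) (hso : IsOpen s)
    (ht : Convex ℝ t) (hst : Disjoint s t) :
    ∃ (w : ι → ℝ) (u : ℝ), (∀ a ∈ s, w ⬝ᵥ a < u) ∧ ∀ b ∈ t, u ≤ w ⬝ᵥ b := by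
  classical
  obtain ⟨f, u, hfs, hft⟩ := geometric_hahn_banach_open hs hso ht hst
  have hf : ∀ z, f z = (fun i => f fun j => if i = j then 1 else 0) ⬝ᵥ z := fun z => by
    rw [← f.coe_coe, f.toLinearMap.pi_apply_eq_sum_univ z]
    simp only [dotProduct, smul_eq_mul, mul_comm, ContinuousLinearMap.coe_coe]
  exact ⟨_, u, fun a ha => hf a ▸ hfs a ha, fun b hb => hf b ▸ hft b hb⟩

lemma nonpos_of_forall_dotProduct_lt {w : ι → ℝ} {u v : ℝ}
    (h : ∀ z : ι → ℝ, (∀ i, v < z i) → w ⬝ᵥ z < u) (i : ι) : w i ≤ 0 := by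
  classical
  by_contra! hi
  set z₀ : ι → ℝ := fun _ => v + 1
  have hz₀ : ∀ j, v < z₀ j := fun _ => lt_add_one v
  set t := (u - w ⬝ᵥ z₀) / w i
  have ht : 0 ≤ t := div_nonneg (by linarith [h z₀ hz₀]) hi.le
  have hu : w ⬝ᵥ (z₀ + Pi.single i t) = u := by
    rw [dotProduct_add, dotProduct_single, mul_div_cancel₀ _ hi.ne', add_sub_cancel]
  refine (h _ fun j => ?_).ne hu
  have : 0 ≤ Pi.single (M := fun _ => ℝ) i t j := by
    by_cases hj : j = i <;> simp [hj, ht]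
  simpa using add_lt_add_of_lt_of_le (hz₀ j) this

theorem exists_mem_stdSimplex_forall_dotProduct_le {T : Set (ι → ℝ)} (hT : Convex ℝ T)
    (hTne : T.Nonempty) {v : ℝ} (h : ∀ z ∈ T, ∃ i, z i ≤ v) :
    ∃ x ∈ stdSimplex ℝ ι, ∀ z ∈ T, x ⬝ᵥ z ≤ v := by
  have hdisj : Disjoint (univ.pi fun _ : ι => Ioi v) T :=
    disjoint_left.2 fun z hz hzT => by
      obtain ⟨i, hi⟩ := h z hzT
      exact hi.not_gt (mem_univ_pi.1 hz i)
  obtain ⟨w, u, hwO, hwT⟩ := geometric_hahn_banach_open_dotProduct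
    (convex_pi fun _ _ => convex_Ioi v) (isOpen_set_pi finite_univ fun _ _ => isOpen_Ioi) hT hdisj
  have hwO' : ∀ z : ι → ℝ, (∀ i, v < z i) → w ⬝ᵥ z < u := fun z hz => hwO z (mem_univ_pi.2 hz)
  have hw : ∀ i, w i ≤ 0 := nonpos_of_forall_dotProduct_lt hwO'
  have hconst : ∀ c, v < c → c * ∑ i, w i < u := fun c hc => by
    simpa [dotProduct, Finset.mul_sum, mul_comm] using hwO' (fun _ => c) fun _ => hc
  set s := -∑ i, w i
  have hs : 0 < s := by
    obtain ⟨z₀, hz₀⟩ := hTne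
    by_contra! hs
    have hw0 : w = 0 := funext fun i =>
      (Finset.sum_eq_zero_iff_of_nonpos fun i _ => hw i).1
        (le_antisymm (Finset.sum_nonpos fun i _ => hw i) (by linarith)) i (Finset.mem_univ i)
    have hu₀ := hwT z₀ hz₀
    have hu₁ := hconst (v + 1) (lt_add_one v)
    simp only [hw0, zero_dotProduct, Pi.zero_apply, Finset.sum_const_zero, mul_zero] at hu₀ hu₁
    linarith
  refine ⟨s⁻¹ • -w, ⟨fun i => ?_, ?_⟩, fun z hz => ?_⟩
  · exact mul_nonneg (inv_nonneg.2 hs.le) (neg_nonneg.2 (hw i))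
  · simp only [Pi.smul_apply, Pi.neg_apply, smul_eq_mul, ← Finset.mul_sum,
      Finset.sum_neg_distrib]
    exact inv_mul_cancel₀ hs.ne'
  · calc s⁻¹ • -w ⬝ᵥ z = -(w ⬝ᵥ z) / s := by
          rw [smul_dotProduct, neg_dotProduct, smul_eq_mul, div_eq_inv_mul]
      _ ≤ -u / s := by gcongr; exact hwT z hz
      _ ≤ v := le_of_forall_gt_imp_ge_of_dense fun c hc => by
        rw [div_le_iff₀ hs]
        linarith [hconst c hc]

end Simplex

section MatrixGame

variable {ι κ : Type*} [Fintype ι] [Fintype κ]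

lemma isBounded_range_dotProduct_mulVec (A : Matrix ι κ ℝ) :
    IsBounded (range (uncurry fun (x : stdSimplex ℝ ι) (y : stdSimplex ℝ κ) =>
      (x : ι → ℝ) ⬝ᵥ A *ᵥ y)) :=
  (isCompact_range (by fun_prop)).isBounded

theorem ciInf_ciSup_le_ciSup_ciInf_dotProduct_mulVec [Nonempty ι] [Nonempty κ]
    (A : Matrix ι κ ℝ) :
    ⨅ x : stdSimplex ℝ ι, ⨆ y : stdSimplex ℝ κ, (x : ι → ℝ) ⬝ᵥ A *ᵥ y ≤
      ⨆ y : stdSimplex ℝ κ, ⨅ x : stdSimplex ℝ ι, (x : ι → ℝ) ⬝ᵥ A *ᵥ y := by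
  have hf := isBounded_range_dotProduct_mulVec A
  set v := ⨆ y : stdSimplex ℝ κ, ⨅ x : stdSimplex ℝ ι, (x : ι → ℝ) ⬝ᵥ A *ᵥ y
  have hcoord : ∀ z ∈ A.mulVecLin '' stdSimplex ℝ κ, ∃ i, z i ≤ v := by
    rintro _ ⟨y, hy, rfl⟩
    obtain ⟨i, hi⟩ := exists_forall_le_dotProduct (A *ᵥ y)
    exact ⟨i, (le_ciInf fun x : stdSimplex ℝ ι => hi x x.2).trans
      (le_ciSup (bddAbove_range_ciInf_of_isBounded_range_uncurry hf) ⟨y, hy⟩)⟩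
  obtain ⟨x₀, hx₀, hx₀A⟩ := exists_mem_stdSimplex_forall_dotProduct_le
    ((convex_stdSimplex ℝ κ).linear_image A.mulVecLin)
    ((nonempty_coe_sort.1 inferInstance).image _) hcoord
  exact (ciInf_le (bddBelow_range_ciSup_of_isBounded_range_uncurry hf) ⟨x₀, hx₀⟩).trans
    (ciSup_le fun y => hx₀A _ ⟨y, y.2, rfl⟩)

theorem ciSup_ciInf_eq_ciInf_ciSup_dotProduct_mulVec [Nonempty ι] [Nonempty κ]
    (A : Matrix ι κ ℝ) :
    ⨆ y : stdSimplex ℝ κ, ⨅ x : stdSimplex ℝ ι, (x : ι → ℝ) ⬝ᵥ A *ᵥ y =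
      ⨅ x : stdSimplex ℝ ι, ⨆ y : stdSimplex ℝ κ, (x : ι → ℝ) ⬝ᵥ A *ᵥ y :=
  le_antisymm (ciSup_ciInf_le_ciInf_ciSup_of_isBounded (isBounded_range_dotProduct_mulVec A))
    (ciInf_ciSup_le_ciSup_ciInf_dotProduct_mulVec A)

end MatrixGame

/-- Minimax via no-regret: the minimax equality holds, and the average iterates
of a pair of `ε`-regret algorithms (forming a `2ε`-Nash pair) approximate the
game value to within `2ε`. -/
theorem stmt_13 {m n : ℕ} [NeZero m] [NeZero n] (A : Matrix (Fin m) (Fin n) ℝ) :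
    (⨆ y : stdSimplex ℝ (Fin n), ⨅ x : stdSimplex ℝ (Fin m),
        (x : Fin m → ℝ) ⬝ᵥ A.mulVec y)
      = (⨅ x : stdSimplex ℝ (Fin m), ⨆ y : stdSimplex ℝ (Fin n),
        (x : Fin m → ℝ) ⬝ᵥ A.mulVec y) ∧
    (∀ ε ≥ (0 : ℝ), ∀ xbar ∈ stdSimplex ℝ (Fin m), ∀ ybar ∈ stdSimplex ℝ (Fin n),
      (∀ x' ∈ stdSimplex ℝ (Fin m),
        xbar ⬝ᵥ A.mulVec ybar ≤ x' ⬝ᵥ A.mulVec ybar + 2 * ε) →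
      (∀ y' ∈ stdSimplex ℝ (Fin n),
        xbar ⬝ᵥ A.mulVec y' ≤ xbar ⬝ᵥ A.mulVec ybar + 2 * ε) →
      |xbar ⬝ᵥ A.mulVec ybar
          - ⨅ x : stdSimplex ℝ (Fin m), ⨆ y : stdSimplex ℝ (Fin n),
              (x : Fin m → ℝ) ⬝ᵥ A.mulVec y| ≤ 2 * ε) := by
  have hminimax := ciSup_ciInf_eq_ciInf_ciSup_dotProduct_mulVec A
  refine ⟨hminimax, fun ε _ xbar hxbar ybar hybar hx hy => ?_⟩
  exact abs_sub_ciInf_ciSup_le_of_forall_le_add (isBounded_range_dotProduct_mulVec A) hminimax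
    (x₀ := ⟨xbar, hxbar⟩) (y₀ := ⟨ybar, hybar⟩) (fun x => hx x x.2) (fun y => hy y y.2)
end

section
/- For the dilated entropy function on a two-level sequence-form tree, the minimizer admits a closed form via recursive softmax: let h(x, y) = ∑_a x_a log x_a + ∑_a x_a ∑_{b ∈ C(a)} (y_{a,b}/x_a) log(y_{a,b}/x_a) over the set {(x,y) : x ∈ Δ_A, y_{a,·}/x_a ∈ Δ_{C(a)}}. Then for utility vectors u (on top-level actions) and w (on second-level actions), the maximizer of u·x + w·y − h(x,y) is given by: y_{a,b}/x_a ∝_b exp(w_{a,b}), and x_a ∝ exp(u_a + log ∑_b exp(w_{a,b})). -/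
open Finset Real

/-- The two-level sequence-form polytope: `x` is a distribution over top-level
actions and, for each `a`, the conditional distribution `y a · / x a` lies in
the simplex over the children of `a` (encoded by `∑ b, y a b = x a`, `y ≥ 0`). -/
def seqPolytope {ι : Type*} [Fintype ι] (κ : ι → Type*) [∀ a, Fintype (κ a)] :
    Set ((ι → ℝ) × (∀ a, κ a → ℝ)) :=
  {p | p.1 ∈ stdSimplex ℝ ι ∧ (∀ a b, 0 ≤ p.2 a b) ∧ ∀ a, ∑ b, p.2 a b = p.1 a}

/-- The dilated entropy on a depth-2 tree. -/
noncomputable def dilatedEntropy {ι : Type*} [Fintype ι] (κ : ι → Type*)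
    [∀ a, Fintype (κ a)] (p : (ι → ℝ) × (∀ a, κ a → ℝ)) : ℝ :=
  ∑ a, p.1 a * Real.log (p.1 a)
    + ∑ a, ∑ b, p.2 a b * Real.log (p.2 a b / p.1 a)

/-!
Index the leaves of the tree by `Σ a, κ a` and give the leaf `⟨a, b⟩` the utility
`θ ⟨a, b⟩ = u a + w a b`. On the polytope the dilated entropy telescopes,
`x a * log (x a) + ∑ b, y a b * log (y a b / x a) = ∑ b, y a b * log (y a b)`,
so the objective is `∑ i, (θ i * q i - q i * log (q i))` for the leaf distribution `q = y`.
By Gibbs' variational principle this is at most `log ∑ i, exp (θ i)`, with equality at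
`q = softmax θ`. Finally `softmax θ` is the recursive softmax of the statement, because
`exp (u a + log ∑ b, exp (w a b)) = ∑ b, exp (u a + w a b)`.
-/

noncomputable def softmax {α : Type*} [Fintype α] (θ : α → ℝ) (i : α) : ℝ :=
  exp (θ i) / ∑ j, exp (θ j)

section Gibbs

variable {α : Type*} [Fintype α]

lemma mul_log_sub_mul_log_le_sub {q s : ℝ} (hq : 0 ≤ q) (hs : 0 < s) :
    q * log s - q * log q ≤ s - q := by
  rcases hq.eq_or_lt with rfl | hq
  · simpa using hs.le
  · have h := mul_le_mul_of_nonneg_left (log_le_sub_one_of_pos (div_pos hs hq)) hq.le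
    rwa [log_div hs.ne' hq.ne', mul_sub, mul_sub, mul_one, mul_div_cancel₀ _ hq.ne'] at h

lemma mul_log_add_mul_log_div {x y : ℝ} (h : x = 0 → y = 0) :
    y * log x + y * log (y / x) = y * log y := by
  by_cases hy : y = 0
  · simp [hy]
  · rw [log_div hy fun hx => hy (h hx)]
    ring

lemma sum_exp_pos [Nonempty α] (θ : α → ℝ) : 0 < ∑ i, exp (θ i) :=
  sum_pos (fun _ _ => exp_pos _) univ_nonempty

lemma exp_add_log_sum_exp [Nonempty α] (c : ℝ) (f : α → ℝ) :
    exp (c + log (∑ i, exp (f i))) = ∑ i, exp (c + f i) := by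
  simp only [exp_add, exp_log (sum_exp_pos f), mul_sum]

lemma softmax_pos [Nonempty α] (θ : α → ℝ) (i : α) : 0 < softmax θ i :=
  div_pos (exp_pos _) (sum_exp_pos θ)

lemma sum_softmax [Nonempty α] (θ : α → ℝ) : ∑ i, softmax θ i = 1 := by
  simp only [softmax]
  rw [← sum_div, div_self (sum_exp_pos θ).ne']

lemma log_softmax [Nonempty α] (θ : α → ℝ) (i : α) :
    log (softmax θ i) = θ i - log (∑ j, exp (θ j)) := by
  rw [softmax, log_div (exp_ne_zero _) (sum_exp_pos θ).ne', log_exp]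

theorem sum_mul_sub_mul_log_le_log_sum_exp (θ q : α → ℝ) (hq : ∀ i, 0 ≤ q i)
    (hq1 : ∑ i, q i = 1) :
    ∑ i, (θ i * q i - q i * log (q i)) ≤ log (∑ i, exp (θ i)) := by
  obtain ⟨i₀, -, -⟩ := exists_ne_zero_of_sum_ne_zero (hq1 ▸ one_ne_zero : ∑ i, q i ≠ 0)
  have : Nonempty α := ⟨i₀⟩
  set L := log (∑ i, exp (θ i))
  calc ∑ i, (θ i * q i - q i * log (q i))
      = ∑ i, (q i * log (softmax θ i) - q i * log (q i)) + L * ∑ i, q i := by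
        simp only [log_softmax, mul_sum, ← sum_add_distrib]
        exact sum_congr rfl fun i _ => by ring
    _ ≤ ∑ i, (softmax θ i - q i) + L * 1 := by
        rw [hq1]
        exact add_le_add (sum_le_sum fun i _ =>
          mul_log_sub_mul_log_le_sub (hq i) (softmax_pos θ i)) le_rfl
    _ = L := by rw [sum_sub_distrib, sum_softmax, hq1]; ring

theorem sum_mul_softmax_sub_mul_log_softmax [Nonempty α] (θ : α → ℝ) :
    ∑ i, (θ i * softmax θ i - softmax θ i * log (softmax θ i)) = log (∑ i, exp (θ i)) := by
  simp only [log_softmax]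
  calc _ = (∑ i, softmax θ i) * log (∑ i, exp (θ i)) := by
        rw [sum_mul]; exact sum_congr rfl fun i _ => by ring
    _ = _ := by rw [sum_softmax, one_mul]

end Gibbs

section SequenceForm

variable {ι : Type*} [Fintype ι] {κ : ι → Type*} [∀ a, Fintype (κ a)]

def leafUtility (u : ι → ℝ) (w : ∀ a, κ a → ℝ) (i : Σ a, κ a) : ℝ :=
  u i.1 + w i.1 i.2

lemma objective_eq_sum_leaf (u : ι → ℝ) (w : ∀ a, κ a → ℝ)
    {p : (ι → ℝ) × (∀ a, κ a → ℝ)} (hp : p ∈ seqPolytope κ) :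
    (∑ a, u a * p.1 a) + (∑ a, ∑ b, w a b * p.2 a b) - dilatedEntropy κ p
      = ∑ i : Σ a, κ a,
          (leafUtility u w i * p.2 i.1 i.2 - p.2 i.1 i.2 * log (p.2 i.1 i.2)) := by
  obtain ⟨-, hy, hsum⟩ := hp
  have hx : ∀ a, p.1 a = 0 → ∀ b, p.2 a b = 0 := fun a ha b =>
    (sum_eq_zero_iff_of_nonneg fun b _ => hy a b).1 ((hsum a).trans ha) b (mem_univ b)
  simp only [Fintype.sum_sigma, leafUtility, dilatedEntropy, ← hsum, sum_mul, mul_sum,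
    ← sum_add_distrib, ← sum_sub_distrib]
  refine sum_congr rfl fun a _ => sum_congr rfl fun b _ => ?_
  have htelescope := mul_log_add_mul_log_div (hx a · b)
  rw [hsum]
  linarith

lemma sum_leaf_eq_one {p : (ι → ℝ) × (∀ a, κ a → ℝ)} (hp : p ∈ seqPolytope κ) :
    ∑ i : Σ a, κ a, p.2 i.1 i.2 = 1 := by
  simpa only [Fintype.sum_sigma, hp.2.2] using hp.1.2

lemma marginals_mem_seqPolytope {q : (Σ a, κ a) → ℝ} (hq : ∀ i, 0 ≤ q i)
    (hq1 : ∑ i, q i = 1) :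
    ((fun a => ∑ b, q ⟨a, b⟩), (fun a b => q ⟨a, b⟩)) ∈ seqPolytope κ :=
  ⟨⟨fun _ => sum_nonneg fun _ _ => hq _, by rw [← hq1, Fintype.sum_sigma]⟩,
    fun _ _ => hq _, fun _ => rfl⟩

lemma recursiveSoftmax_eq_sum_softmax [∀ a, Nonempty (κ a)] (u : ι → ℝ) (w : ∀ a, κ a → ℝ)
    (a : ι) :
    exp (u a + log (∑ b, exp (w a b))) / ∑ a', exp (u a' + log (∑ b, exp (w a' b)))
      = ∑ b, softmax (leafUtility u w) ⟨a, b⟩ := by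
  simp only [exp_add_log_sum_exp, softmax, leafUtility, Fintype.sum_sigma, sum_div]

lemma sum_softmax_mul_softmax [∀ a, Nonempty (κ a)] (u : ι → ℝ) (w : ∀ a, κ a → ℝ)
    (a : ι) (b : κ a) :
    (∑ b', softmax (leafUtility u w) ⟨a, b'⟩) * softmax (w a) b
      = softmax (leafUtility u w) ⟨a, b⟩ := by
  have hZ := (sum_exp_pos (w a)).ne'
  simp only [softmax, leafUtility, ← sum_div, exp_add, ← mul_sum]
  field_simp

end SequenceForm

/-- The maximizer of `u·x + w·y − h(x,y)` over the depth-2 sequence-form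
polytope, with `h` the dilated entropy, is given by recursive softmax:
`y_{a,b}/x_a ∝ exp(w_{a,b})` and `x_a ∝ exp(u_a + log ∑_b exp(w_{a,b}))`. -/
theorem stmt_14 {ι : Type*} [Fintype ι] [Nonempty ι] (κ : ι → Type*)
    [∀ a, Fintype (κ a)] [∀ a, Nonempty (κ a)]
    (u : ι → ℝ) (w : ∀ a, κ a → ℝ)
    (xstar : ι → ℝ) (ystar : ∀ a, κ a → ℝ)
    (hxstar : ∀ a, xstar a
      = Real.exp (u a + Real.log (∑ b, Real.exp (w a b)))
        / ∑ a', Real.exp (u a' + Real.log (∑ b, Real.exp (w a' b))))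
    (hystar : ∀ a b, ystar a b
      = xstar a * (Real.exp (w a b) / ∑ b', Real.exp (w a b'))) :
    (xstar, ystar) ∈ seqPolytope κ ∧
    ∀ p ∈ seqPolytope κ,
      (∑ a, u a * p.1 a) + (∑ a, ∑ b, w a b * p.2 a b) - dilatedEntropy κ p
        ≤ (∑ a, u a * xstar a) + (∑ a, ∑ b, w a b * ystar a b)
            - dilatedEntropy κ (xstar, ystar) := by
  set θ := leafUtility u w
  have hx : xstar = fun a => ∑ b, softmax θ ⟨a, b⟩ :=
    funext fun a => (hxstar a).trans (recursiveSoftmax_eq_sum_softmax u w a)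
  have hy : ystar = fun a b => softmax θ ⟨a, b⟩ := by
    funext a b
    rw [hystar, hx]
    exact sum_softmax_mul_softmax u w a b
  subst hx hy
  have : Nonempty (Σ a, κ a) := ⟨⟨Classical.arbitrary ι, Classical.arbitrary _⟩⟩
  have hmem := marginals_mem_seqPolytope (fun i => (softmax_pos θ i).le) (sum_softmax θ)
  refine ⟨hmem, fun p hp => ?_⟩
  rw [objective_eq_sum_leaf u w hp, objective_eq_sum_leaf u w hmem]
  calc _ ≤ log (∑ i, exp (θ i)) :=
        sum_mul_sub_mul_log_le_log_sum_exp θ _ (fun _ => hp.2.1 _ _) (sum_leaf_eq_one hp)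
    _ = _ := (sum_mul_softmax_sub_mul_log_softmax θ).symm
end

section
/- (Entropy-regularized equilibrium approximates Nash) Let A ∈ ℝ^{m×n} and β > 0, and let (x_β, y_β) be the saddle point of x^T A y + β h₁(x) − β h₂(y) over Δ_m × Δ_n, where h₁, h₂ are negative entropies. Then (x_β, y_β) is an ε-Nash equilibrium of the original game with ε ≤ β(log m + log n). -/
/-!
On the simplex the negative entropy `h(x) = ∑ xᵢ log xᵢ` takes values in `[-log k, 0]`. Playing
`x` instead of `x_β` against `y_β` lowers the bilinear payoff by at most
`β (h(x) - h(x_β)) ≤ β log m`, since `x_β` minimizes the smoothed objective in `x`; symmetrically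
for the maximizing player, with `β log n`. Each one-sided gap is thus below `β (log m + log n)`.
-/

open Matrix Finset Real

section NegEntropy

variable {ι : Type*} [Fintype ι] {x : ι → ℝ}

lemma sum_mul_log_nonpos_of_mem_stdSimplex (hx : x ∈ stdSimplex ℝ ι) :
    ∑ i, x i * log (x i) ≤ 0 :=
  sum_nonpos fun i _ ↦
    mul_log_nonpos (mem_Icc_of_mem_stdSimplex hx i).1 (mem_Icc_of_mem_stdSimplex hx i).2

/-- Jensen's inequality for the concave `negMulLog` with uniform weights. -/
lemma neg_log_card_le_sum_mul_log_of_mem_stdSimplex (hx : x ∈ stdSimplex ℝ ι) :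
    -log (Fintype.card ι) ≤ ∑ i, x i * log (x i) := by
  have hι : Nonempty ι := by
    by_contra h
    rw [not_nonempty_iff] at h
    simpa using hx.2
  have hk : (0 : ℝ) < Fintype.card ι := Nat.cast_pos.mpr Fintype.card_pos
  have jensen := concaveOn_negMulLog.le_map_sum (t := univ)
    (w := fun _ ↦ (Fintype.card ι : ℝ)⁻¹) (p := x) (fun _ _ ↦ by positivity)
    (by simp [card_univ, hk.ne']) (fun i _ ↦ hx.1 i)
  simp only [smul_eq_mul, ← mul_sum, hx.2, mul_one, negMulLog, log_inv] at jensen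
  rw [← mul_le_mul_iff_of_pos_left (inv_pos.mpr hk)]
  simp only [neg_mul, sum_neg_distrib, mul_neg] at jensen ⊢
  linarith

end NegEntropy

theorem stmt_17_general {m n : ℕ}
    (A : Matrix (Fin m) (Fin n) ℝ) (β : ℝ) (hβ : 0 < β)
    (Φ : (Fin m → ℝ) → (Fin n → ℝ) → ℝ)
    (hΦ : ∀ x y, Φ x y = x ⬝ᵥ A.mulVec y
      + β * ∑ i, x i * Real.log (x i) - β * ∑ j, y j * Real.log (y j))
    (xb : Fin m → ℝ) (yb : Fin n → ℝ)
    (hxb : xb ∈ stdSimplex ℝ (Fin m)) (hyb : yb ∈ stdSimplex ℝ (Fin n))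
    (hsaddle1 : ∀ x ∈ stdSimplex ℝ (Fin m), Φ xb yb ≤ Φ x yb)
    (hsaddle2 : ∀ y ∈ stdSimplex ℝ (Fin n), Φ xb y ≤ Φ xb yb) :
    (∀ x ∈ stdSimplex ℝ (Fin m),
      xb ⬝ᵥ A.mulVec yb ≤ x ⬝ᵥ A.mulVec yb + β * (Real.log m + Real.log n)) ∧
    (∀ y ∈ stdSimplex ℝ (Fin n),
      xb ⬝ᵥ A.mulVec y ≤ xb ⬝ᵥ A.mulVec yb + β * (Real.log m + Real.log n)) := by
  have hlog_m := mul_nonneg hβ.le (log_natCast_nonneg m)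
  have hlog_n := mul_nonneg hβ.le (log_natCast_nonneg n)
  have hxb_lb := mul_le_mul_of_nonneg_left
    (neg_log_card_le_sum_mul_log_of_mem_stdSimplex hxb) hβ.le
  have hyb_lb := mul_le_mul_of_nonneg_left
    (neg_log_card_le_sum_mul_log_of_mem_stdSimplex hyb) hβ.le
  simp only [Fintype.card_fin] at hxb_lb hyb_lb
  refine ⟨fun x hx ↦ ?_, fun y hy ↦ ?_⟩
  · have hsaddle := hsaddle1 x hx
    have hx_ub := mul_nonpos_of_nonneg_of_nonpos hβ.le (sum_mul_log_nonpos_of_mem_stdSimplex hx)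
    rw [hΦ, hΦ] at hsaddle
    linarith
  · have hsaddle := hsaddle2 y hy
    have hy_ub := mul_nonpos_of_nonneg_of_nonpos hβ.le (sum_mul_log_nonpos_of_mem_stdSimplex hy)
    rw [hΦ, hΦ] at hsaddle
    linarith

/-- An entropy-regularized equilibrium approximates Nash: a saddle point of
`xᵀAy + β h₁(x) − β h₂(y)` over `Δ_m × Δ_n` (with `h₁, h₂` negative entropies,
`x` minimizing and `y` maximizing) is an `ε`-Nash equilibrium of the original
bilinear game with `ε ≤ β(log m + log n)`. -/
theorem stmt_17 {m n : ℕ} [NeZero m] [NeZero n]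
    (A : Matrix (Fin m) (Fin n) ℝ) (β : ℝ) (hβ : 0 < β)
    (Φ : (Fin m → ℝ) → (Fin n → ℝ) → ℝ)
    (hΦ : ∀ x y, Φ x y = x ⬝ᵥ A.mulVec y
      + β * ∑ i, x i * Real.log (x i) - β * ∑ j, y j * Real.log (y j))
    (xb : Fin m → ℝ) (yb : Fin n → ℝ)
    (hxb : xb ∈ stdSimplex ℝ (Fin m)) (hyb : yb ∈ stdSimplex ℝ (Fin n))
    (hsaddle1 : ∀ x ∈ stdSimplex ℝ (Fin m), Φ xb yb ≤ Φ x yb)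
    (hsaddle2 : ∀ y ∈ stdSimplex ℝ (Fin n), Φ xb y ≤ Φ xb yb) :
    (∀ x ∈ stdSimplex ℝ (Fin m),
      xb ⬝ᵥ A.mulVec yb ≤ x ⬝ᵥ A.mulVec yb + β * (Real.log m + Real.log n)) ∧
    (∀ y ∈ stdSimplex ℝ (Fin n),
      xb ⬝ᵥ A.mulVec y ≤ xb ⬝ᵥ A.mulVec yb + β * (Real.log m + Real.log n)) :=
  stmt_17_general A β hβ Φ hΦ xb yb hxb hyb hsaddle1 hsaddle2
end
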